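/- arXiv:2501.02889 — 2 statements merged into one kernel-verified Lean document; each statement's English description precedes it below -/
import Mathlib

section
/- For any T ∈ (0,∞) and any g ∈ L²(I), there exists a unique solution u ∈ C¹([0,T], L²(I)) of the continuum-limit Kuramoto equation with initial condition u(0) = g; moreover, the solution depends continuously on the initial datum g (in the L²(I) norm, uniformly on [0,T]). -/
open MeasureTheory Real Set Filter
open scoped NNReal ENNReal

/-- Lebesgue measure restricted to `I = [0,1]`. -/
noncomputable def muI : Measure ℝ := volume.restrict (Set.Icc (0:ℝ) 1)

/-- the right-hand side of the continuum-limit Kuramoto equation, evaluated at the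
(representative of the) state `f`. -/
noncomputable def clRHS (ω : ℝ → ℝ) (K : ℝ) (f : ℝ → ℝ) (x : ℝ) : ℝ :=
  ω x + K * ∫ y, Real.sin (f y - f x) ∂muI

/-- `U : [0,T] → L²(I)` is a `C¹` solution of the continuum-limit Kuramoto equation:
there is a continuous map `D : [0,T] → L²(I)` which is the derivative of `U` on `[0,T]`
and which agrees a.e. with `ω(x) + K ∫_I sin(U(t,y) − U(t,x)) dy` for each `t ∈ [0,T]`. -/
def IsCLSolLp (ω : ℝ → ℝ) (K T : ℝ) (U : ℝ → Lp ℝ 2 muI) : Prop :=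
  ∃ D : ℝ → Lp ℝ 2 muI,
    ContinuousOn U (Set.Icc 0 T) ∧
    ContinuousOn D (Set.Icc 0 T) ∧
    ∀ t ∈ Set.Icc 0 T,
      HasDerivWithinAt U (D t) (Set.Icc 0 T) t ∧
      ∀ᵐ x ∂muI, (D t : ℝ → ℝ) x = clRHS ω K (U t) x
instance : IsProbabilityMeasure muI := ⟨by simp [muI, Real.volume_Icc]⟩
lemma lipsin : LipschitzWith 1 Real.sin := by
  apply lipschitzWith_of_nnnorm_deriv_le Real.differentiable_sin
  intro x; rw [Real.deriv_sin, ← NNReal.coe_le_coe, coe_nnnorm, NNReal.coe_one]; simpa using Real.abs_cos_le_one x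
lemma lipcos : LipschitzWith 1 Real.cos := by
  apply lipschitzWith_of_nnnorm_deriv_le Real.differentiable_cos
  intro x; rw [Real.deriv_cos, ← NNReal.coe_le_coe, coe_nnnorm, NNReal.coe_one]; simpa [abs_neg] using Real.abs_sin_le_one x

lemma memSin (f : Lp ℝ 2 muI) : MemLp (fun x => Real.sin (f x)) 2 muI :=
  MemLp.of_bound (Real.continuous_sin.comp_aestronglyMeasurable (Lp.aestronglyMeasurable f)) 1
    (Filter.Eventually.of_forall fun x => by simpa using Real.abs_sin_le_one (f x))

lemma memCos (f : Lp ℝ 2 muI) : MemLp (fun x => Real.cos (f x)) 2 muI :=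
  MemLp.of_bound (Real.continuous_cos.comp_aestronglyMeasurable (Lp.aestronglyMeasurable f)) 1
    (Filter.Eventually.of_forall fun x => by simpa using Real.abs_cos_le_one (f x))

noncomputable def sLp (f : Lp ℝ 2 muI) : Lp ℝ 2 muI := (memSin f).toLp _
noncomputable def cLp (f : Lp ℝ 2 muI) : Lp ℝ 2 muI := (memCos f).toLp _

lemma sLp_ae (f : Lp ℝ 2 muI) : ⇑(sLp f) =ᵐ[muI] fun x => Real.sin (f x) := (memSin f).coeFn_toLp
lemma cLp_ae (f : Lp ℝ 2 muI) : ⇑(cLp f) =ᵐ[muI] fun x => Real.cos (f x) := (memCos f).coeFn_toLp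

lemma norm_sLp_le (f : Lp ℝ 2 muI) : ‖sLp f‖ ≤ 1 := by
  have := Lp.norm_le_of_ae_bound (f := sLp f) zero_le_one
    (sLp_ae f |>.mono fun x hx => by rw [hx]; simpa using Real.abs_sin_le_one (f x))
  simpa [measureUnivNNReal, measure_univ] using this

lemma norm_cLp_le (f : Lp ℝ 2 muI) : ‖cLp f‖ ≤ 1 := by
  have := Lp.norm_le_of_ae_bound (f := cLp f) zero_le_one
    (cLp_ae f |>.mono fun x hx => by rw [hx]; simpa using Real.abs_cos_le_one (f x))
  simpa [measureUnivNNReal, measure_univ] using this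

lemma norm_sLp_sub (f g : Lp ℝ 2 muI) : ‖sLp f - sLp g‖ ≤ ‖f - g‖ := by
  apply Lp.norm_le_norm_of_ae_le
  filter_upwards [Lp.coeFn_sub (sLp f) (sLp g), Lp.coeFn_sub f g, sLp_ae f, sLp_ae g] with x h1 h2 h3 h4
  rw [h1, h2]
  simp only [Pi.sub_apply, h3, h4, Real.norm_eq_abs]
  simpa [Real.dist_eq] using lipsin.dist_le_mul (f x) (g x)

lemma norm_cLp_sub (f g : Lp ℝ 2 muI) : ‖cLp f - cLp g‖ ≤ ‖f - g‖ := by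
  apply Lp.norm_le_norm_of_ae_le
  filter_upwards [Lp.coeFn_sub (cLp f) (cLp g), Lp.coeFn_sub f g, cLp_ae f, cLp_ae g] with x h1 h2 h3 h4
  rw [h1, h2]
  simp only [Pi.sub_apply, h3, h4, Real.norm_eq_abs]
  simpa [Real.dist_eq] using lipcos.dist_le_mul (f x) (g x)

lemma abs_integral_le_norm (h : Lp ℝ 2 muI) : |∫ x, h x ∂muI| ≤ ‖h‖ := by
  have h1 : ∫ x, h x ∂muI = inner ℝ h (Lp.const 2 muI (1:ℝ)) := by
    rw [L2.inner_def]
    refine integral_congr_ae ?_ |>.symm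
    filter_upwards [Lp.coeFn_const 2 muI (1:ℝ)] with x hx
    simp [hx, RCLike.inner_apply]
  rw [h1, ← Real.norm_eq_abs]
  have h2 : ‖Lp.const 2 muI (1:ℝ)‖ ≤ 1 := by
    simpa [measure_univ] using Lp.norm_const_le (p := 2) (μ := muI) (c := (1:ℝ))
  calc ‖(inner ℝ h (Lp.const 2 muI (1:ℝ)) : ℝ)‖ ≤ ‖h‖ * ‖Lp.const 2 muI (1:ℝ)‖ :=
        norm_inner_le_norm _ _
  _ ≤ ‖h‖ * 1 := mul_le_mul_of_nonneg_left h2 (norm_nonneg _)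
  _ = ‖h‖ := mul_one _

noncomputable def intA (f : Lp ℝ 2 muI) : ℝ := ∫ x, Real.sin (f x) ∂muI
noncomputable def intB (f : Lp ℝ 2 muI) : ℝ := ∫ x, Real.cos (f x) ∂muI

lemma abs_intA_le (f : Lp ℝ 2 muI) : |intA f| ≤ 1 := by
  have := norm_integral_le_of_norm_le_const (μ := muI) (C := 1)
    (f := fun x => Real.sin (f x)) (Filter.Eventually.of_forall fun x =>
      (Real.norm_eq_abs _).le.trans (by simpa using Real.abs_sin_le_one (f x)))
  simpa [intA, measure_univ, Real.norm_eq_abs] using this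

lemma abs_intB_le (f : Lp ℝ 2 muI) : |intB f| ≤ 1 := by
  have := norm_integral_le_of_norm_le_const (μ := muI) (C := 1)
    (f := fun x => Real.cos (f x)) (Filter.Eventually.of_forall fun x =>
      (Real.norm_eq_abs _).le.trans (by simpa using Real.abs_cos_le_one (f x)))
  simpa [intB, measure_univ, Real.norm_eq_abs] using this

lemma integrable_Lp (h : Lp ℝ 2 muI) : Integrable (⇑h) muI :=
  (Lp.memLp h).integrable (by norm_num)

lemma intA_eq (f : Lp ℝ 2 muI) : intA f = ∫ x, (sLp f) x ∂muI :=
  (integral_congr_ae (sLp_ae f)).symm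
lemma intB_eq (f : Lp ℝ 2 muI) : intB f = ∫ x, (cLp f) x ∂muI :=
  (integral_congr_ae (cLp_ae f)).symm

lemma abs_intA_sub (f g : Lp ℝ 2 muI) : |intA f - intA g| ≤ ‖f - g‖ := by
  have h1 : intA f - intA g = ∫ x, (sLp f - sLp g) x ∂muI := by
    rw [intA_eq, intA_eq, ← integral_sub (integrable_Lp _) (integrable_Lp _)]
    refine integral_congr_ae ?_ |>.symm
    filter_upwards [Lp.coeFn_sub (sLp f) (sLp g)] with x hx
    simpa using hx
  rw [h1]
  exact (abs_integral_le_norm _).trans (norm_sLp_sub f g)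

lemma abs_intB_sub (f g : Lp ℝ 2 muI) : |intB f - intB g| ≤ ‖f - g‖ := by
  have h1 : intB f - intB g = ∫ x, (cLp f - cLp g) x ∂muI := by
    rw [intB_eq, intB_eq, ← integral_sub (integrable_Lp _) (integrable_Lp _)]
    refine integral_congr_ae ?_ |>.symm
    filter_upwards [Lp.coeFn_sub (cLp f) (cLp g)] with x hx
    simpa using hx
  rw [h1]
  exact (abs_integral_le_norm _).trans (norm_cLp_sub f g)

variable {ω : ℝ → ℝ} (hω : MemLp ω 2 muI) {K : ℝ}

noncomputable def Fv (hω : MemLp ω 2 muI) (K : ℝ) (f : Lp ℝ 2 muI) : Lp ℝ 2 muI :=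
  hω.toLp ω + K • (intA f • cLp f - intB f • sLp f)

lemma Fv_ae (f : Lp ℝ 2 muI) : ⇑(Fv hω K f) =ᵐ[muI] clRHS ω K ⇑f := by
  have hs : Integrable (fun y => Real.sin (f y)) muI := (memSin f).integrable (by norm_num)
  have hc : Integrable (fun y => Real.cos (f y)) muI := (memCos f).integrable (by norm_num)
  have key : ∀ x : ℝ, (∫ y, Real.sin (f y - f x) ∂muI)
      = intA f * Real.cos (f x) - intB f * Real.sin (f x) := by
    intro x
    have : (fun y => Real.sin (f y - f x))
        = fun y => Real.sin (f y) * Real.cos (f x) - Real.cos (f y) * Real.sin (f x) := by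
      funext y; rw [Real.sin_sub]
    rw [this, integral_sub (hs.mul_const _) (hc.mul_const _),
      integral_mul_const, integral_mul_const]
    rfl
  filter_upwards [Lp.coeFn_add (hω.toLp ω) (K • (intA f • cLp f - intB f • sLp f)),
    Lp.coeFn_smul K (intA f • cLp f - intB f • sLp f),
    Lp.coeFn_sub (intA f • cLp f) (intB f • sLp f),
    Lp.coeFn_smul (intA f) (cLp f), Lp.coeFn_smul (intB f) (sLp f),
    hω.coeFn_toLp, sLp_ae f, cLp_ae f] with x h1 h2 h3 h4 h5 h6 h7 h8
  rw [clRHS, key x, Fv, h1]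
  simp only [Pi.add_apply, h2, Pi.smul_apply, h3, Pi.sub_apply, h4, h5, h6, h7, h8,
    smul_eq_mul]

lemma Fv_lip (hK : 0 ≤ K) (f g : Lp ℝ 2 muI) :
    ‖Fv hω K f - Fv hω K g‖ ≤ 4 * K * ‖f - g‖ := by
  have hX : Fv hω K f - Fv hω K g
      = K • (intA f • (cLp f - cLp g) + (intA f - intA g) • cLp g
        - intB f • (sLp f - sLp g) - (intB f - intB g) • sLp g) := by
    simp only [Fv]
    module
  rw [hX, norm_smul, Real.norm_eq_abs, abs_of_nonneg hK]
  have h1 : ‖intA f • (cLp f - cLp g) + (intA f - intA g) • cLp g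
      - intB f • (sLp f - sLp g) - (intB f - intB g) • sLp g‖ ≤ 4 * ‖f - g‖ := by
    have e1 : ‖intA f • (cLp f - cLp g)‖ ≤ ‖f - g‖ := by
      rw [norm_smul, Real.norm_eq_abs]
      calc |intA f| * ‖cLp f - cLp g‖ ≤ 1 * ‖f - g‖ :=
        mul_le_mul (abs_intA_le f) (norm_cLp_sub f g) (norm_nonneg _) zero_le_one
      _ = ‖f - g‖ := one_mul _
    have e2 : ‖(intA f - intA g) • cLp g‖ ≤ ‖f - g‖ := by
      rw [norm_smul, Real.norm_eq_abs]
      calc |intA f - intA g| * ‖cLp g‖ ≤ ‖f - g‖ * 1 :=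
        mul_le_mul (abs_intA_sub f g) (norm_cLp_le g) (norm_nonneg _) (norm_nonneg _)
      _ = ‖f - g‖ := mul_one _
    have e3 : ‖intB f • (sLp f - sLp g)‖ ≤ ‖f - g‖ := by
      rw [norm_smul, Real.norm_eq_abs]
      calc |intB f| * ‖sLp f - sLp g‖ ≤ 1 * ‖f - g‖ :=
        mul_le_mul (abs_intB_le f) (norm_sLp_sub f g) (norm_nonneg _) zero_le_one
      _ = ‖f - g‖ := one_mul _
    have e4 : ‖(intB f - intB g) • sLp g‖ ≤ ‖f - g‖ := by
      rw [norm_smul, Real.norm_eq_abs]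
      calc |intB f - intB g| * ‖sLp g‖ ≤ ‖f - g‖ * 1 :=
        mul_le_mul (abs_intB_sub f g) (norm_sLp_le g) (norm_nonneg _) (norm_nonneg _)
      _ = ‖f - g‖ := mul_one _
    calc ‖intA f • (cLp f - cLp g) + (intA f - intA g) • cLp g
        - intB f • (sLp f - sLp g) - (intB f - intB g) • sLp g‖
        ≤ ‖intA f • (cLp f - cLp g) + (intA f - intA g) • cLp g
          - intB f • (sLp f - sLp g)‖ + ‖(intB f - intB g) • sLp g‖ := norm_sub_le _ _
      _ ≤ (‖intA f • (cLp f - cLp g) + (intA f - intA g) • cLp g‖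
          + ‖intB f • (sLp f - sLp g)‖) + ‖(intB f - intB g) • sLp g‖ := by
            gcongr; exact norm_sub_le _ _
      _ ≤ ((‖intA f • (cLp f - cLp g)‖ + ‖(intA f - intA g) • cLp g‖)
          + ‖intB f • (sLp f - sLp g)‖) + ‖(intB f - intB g) • sLp g‖ := by
            gcongr; exact norm_add_le _ _
      _ ≤ ((‖f - g‖ + ‖f - g‖) + ‖f - g‖) + ‖f - g‖ := by gcongr
      _ = 4 * ‖f - g‖ := by ring
  calc K * ‖intA f • (cLp f - cLp g) + (intA f - intA g) • cLp g
      - intB f • (sLp f - sLp g) - (intB f - intB g) • sLp g‖ ≤ K * (4 * ‖f - g‖) := by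
        exact mul_le_mul_of_nonneg_left h1 hK
    _ = 4 * K * ‖f - g‖ := by ring

lemma Fv_lipschitzWith (hK : 0 ≤ K) :
    LipschitzWith (4 * K).toNNReal (Fv hω K) := by
  apply LipschitzWith.of_dist_le_mul
  intro f g
  rw [dist_eq_norm, dist_eq_norm, Real.coe_toNNReal _ (by positivity)]
  exact Fv_lip hω hK f g

lemma Fv_continuous (hK : 0 ≤ K) : Continuous (Fv hω K) :=
  (Fv_lipschitzWith hω hK).continuous

section Picard

variable (K : ℝ) {T : ℝ}

noncomputable def Phi (hω : MemLp ω 2 muI) (hK : 0 ≤ K) (hT : 0 ≤ T) (g : Lp ℝ 2 muI)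
    (u : C(Set.Icc (0:ℝ) T, Lp ℝ 2 muI)) : C(Set.Icc (0:ℝ) T, Lp ℝ 2 muI) :=
  ⟨fun t => g + ∫ s in (0:ℝ)..(t:ℝ), Fv hω K (u (Set.projIcc 0 T hT s)),
   by
    have hcu : Continuous fun s : ℝ => Fv hω K (u (Set.projIcc 0 T hT s)) :=
      (Fv_continuous hω hK).comp (u.continuous.comp (continuous_projIcc))
    exact continuous_const.add
      ((intervalIntegral.continuous_primitive (fun a b => hcu.intervalIntegrable _ _) 0).comp
        continuous_subtype_val)⟩

lemma Phi_apply (hω : MemLp ω 2 muI) (hK : 0 ≤ K) (hT : 0 ≤ T) (g : Lp ℝ 2 muI)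
    (u : C(Set.Icc (0:ℝ) T, Lp ℝ 2 muI)) (t : Set.Icc (0:ℝ) T) :
    Phi K hω hK hT g u t = g + ∫ s in (0:ℝ)..(t:ℝ), Fv hω K (u (Set.projIcc 0 T hT s)) := rfl

lemma Phi_est (hω : MemLp ω 2 muI) (hK : 0 ≤ K) (hT : 0 ≤ T) (g : Lp ℝ 2 muI) (n : ℕ)
    (u v : C(Set.Icc (0:ℝ) T, Lp ℝ 2 muI)) (t : Set.Icc (0:ℝ) T) :
    ‖(Phi K hω hK hT g)^[n] u t - (Phi K hω hK hT g)^[n] v t‖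
      ≤ (4*K)^n * (t:ℝ)^n / n.factorial * dist u v := by
  induction n generalizing t with
  | zero =>
    simpa [dist_eq_norm] using ContinuousMap.dist_apply_le_dist (f := u) (g := v) t
  | succ n ih =>
    rw [Function.iterate_succ_apply', Function.iterate_succ_apply']
    set w := (Phi K hω hK hT g)^[n] u with hw
    set w' := (Phi K hω hK hT g)^[n] v with hw'
    have hcw : Continuous fun s : ℝ => Fv hω K (w (Set.projIcc 0 T hT s)) :=
      (Fv_continuous hω hK).comp (w.continuous.comp (continuous_projIcc))
    have hcw' : Continuous fun s : ℝ => Fv hω K (w' (Set.projIcc 0 T hT s)) :=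
      (Fv_continuous hω hK).comp (w'.continuous.comp (continuous_projIcc))
    have hsub : Phi K hω hK hT g w t - Phi K hω hK hT g w' t
        = ∫ s in (0:ℝ)..(t:ℝ), (Fv hω K (w (Set.projIcc 0 T hT s))
            - Fv hω K (w' (Set.projIcc 0 T hT s))) := by
      rw [Phi_apply, Phi_apply, intervalIntegral.integral_sub
        (hcw.intervalIntegrable _ _) (hcw'.intervalIntegrable _ _)]
      abel
    rw [hsub]
    have hbound : ∀ᵐ s ∂(volume.restrict (Set.uIoc (0:ℝ) (t:ℝ))),
        ‖Fv hω K (w (Set.projIcc 0 T hT s)) - Fv hω K (w' (Set.projIcc 0 T hT s))‖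
          ≤ (4*K) * ((4*K)^n * s^n / n.factorial * dist u v) := by
      filter_upwards [ae_restrict_mem measurableSet_uIoc] with s hs
      rw [Set.uIoc_of_le t.2.1] at hs
      have hsmem : s ∈ Set.Icc (0:ℝ) T := ⟨hs.1.le, hs.2.trans t.2.2⟩
      have hproj : Set.projIcc 0 T hT s = ⟨s, hsmem⟩ := Set.projIcc_of_mem hT hsmem
      rw [hproj]
      calc ‖Fv hω K (w ⟨s, hsmem⟩) - Fv hω K (w' ⟨s, hsmem⟩)‖
          ≤ 4 * K * ‖w ⟨s, hsmem⟩ - w' ⟨s, hsmem⟩‖ := Fv_lip hω hK _ _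
        _ ≤ (4*K) * ((4*K)^n * s^n / n.factorial * dist u v) := by
            apply mul_le_mul_of_nonneg_left _ (by positivity)
            exact ih ⟨s, hsmem⟩
    have hgint : IntervalIntegrable
        (fun s => (4*K) * ((4*K)^n * s^n / n.factorial * dist u v)) volume 0 (t:ℝ) := by
      apply Continuous.intervalIntegrable
      fun_prop
    have hval : (∫ s in (0:ℝ)..(t:ℝ), (4*K) * ((4*K)^n * s^n / n.factorial * dist u v))
        = (4*K)^(n+1) * (t:ℝ)^(n+1) / (n+1).factorial * dist u v := by
      have : (fun s : ℝ => (4*K) * ((4*K)^n * s^n / n.factorial * dist u v))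
          = fun s : ℝ => ((4*K) * ((4*K)^n / n.factorial * dist u v)) * s^n := by
        funext s; ring
      rw [this, intervalIntegral.integral_const_mul, integral_pow]
      rw [Nat.factorial_succ]
      push_cast
      have hnf : (n.factorial : ℝ) ≠ 0 := Nat.cast_ne_zero.mpr n.factorial_ne_zero
      field_simp
      ring
    calc ‖∫ s in (0:ℝ)..(t:ℝ), (Fv hω K (w (Set.projIcc 0 T hT s))
            - Fv hω K (w' (Set.projIcc 0 T hT s)))‖
        ≤ |∫ s in (0:ℝ)..(t:ℝ), (4*K) * ((4*K)^n * s^n / n.factorial * dist u v)| :=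
          intervalIntegral.norm_integral_le_abs_of_norm_le hbound hgint
      _ = |(4*K)^(n+1) * (t:ℝ)^(n+1) / (n+1).factorial * dist u v| := by rw [hval]
      _ = (4*K)^(n+1) * (t:ℝ)^(n+1) / (n+1).factorial * dist u v := by
          apply abs_of_nonneg
          have h0t : (0:ℝ) ≤ (t:ℝ) := t.2.1
          positivity

lemma Phi_iter_dist (hω : MemLp ω 2 muI) (hK : 0 ≤ K) (hT : 0 ≤ T) (g : Lp ℝ 2 muI) (n : ℕ)
    (u v : C(Set.Icc (0:ℝ) T, Lp ℝ 2 muI)) :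
    dist ((Phi K hω hK hT g)^[n] u) ((Phi K hω hK hT g)^[n] v)
      ≤ (4*K*T)^n / n.factorial * dist u v := by
  rw [ContinuousMap.dist_le (by positivity)]
  intro t
  rw [dist_eq_norm]
  refine (Phi_est K hω hK hT g n u v t).trans ?_
  have h1 : (4*K)^n * (t:ℝ)^n ≤ (4*K*T)^n := by
    have e : (4*K*T)^n = (4*K)^n * T^n := by rw [mul_pow]
    rw [e]
    exact mul_le_mul_of_nonneg_left (pow_le_pow_left₀ t.2.1 t.2.2 n) (by positivity)
  apply mul_le_mul_of_nonneg_right _ dist_nonneg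
  exact div_le_div_of_nonneg_right h1 (by positivity)

end Picard

section Main

variable {K T : ℝ}

lemma exists_sol (hω : MemLp ω 2 muI) (hK : 0 < K) (hT : 0 < T) (g : Lp ℝ 2 muI) :
    ∃ U : ℝ → Lp ℝ 2 muI, Continuous U ∧
      (∀ t ∈ Set.Icc 0 T, HasDerivWithinAt U (Fv hω K (U t)) (Set.Icc 0 T) t) ∧ U 0 = g := by
  haveI : Nonempty (Set.Icc (0:ℝ) T) := ⟨⟨0, le_rfl, hT.le⟩⟩
  obtain ⟨n, hn⟩ : ∃ n : ℕ, (4*K*T)^n / n.factorial < 1 := by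
    have h0 := FloorSemiring.tendsto_pow_div_factorial_atTop (K := ℝ) (4*K*T)
    exact (h0.eventually_lt_const one_pos).exists
  set c : ℝ≥0 := ((4*K*T)^n / n.factorial).toNNReal with hc
  have hcontr : ContractingWith c ((Phi K hω hK.le hT.le g)^[n]) := by
    constructor
    · exact_mod_cast Real.toNNReal_lt_one.mpr hn
    · apply LipschitzWith.of_dist_le_mul
      intro u v
      rw [hc, Real.coe_toNNReal _ (by positivity)]
      exact Phi_iter_dist K hω hK.le hT.le g n u v
  set u : C(Set.Icc (0:ℝ) T, Lp ℝ 2 muI) := hcontr.fixedPoint ((Phi K hω hK.le hT.le g)^[n])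
    with hu
  have hfix : Phi K hω hK.le hT.le g u = u := hcontr.isFixedPt_fixedPoint_iterate
  set U : ℝ → Lp ℝ 2 muI := fun t => u (Set.projIcc 0 T hT.le t) with hUdef
  have hUcont : Continuous U := u.continuous.comp continuous_projIcc
  haveI : SecondCountableTopologyEither ℝ (Lp ℝ 2 muI) :=
    secondCountableTopologyEither_of_left ℝ _
  have hh : Continuous fun s : ℝ => Fv hω K (U s) := (Fv_continuous hω hK.le).comp hUcont
  have hU_eq : ∀ t ∈ Set.Icc (0:ℝ) T, U t = g + ∫ s in (0:ℝ)..t, Fv hω K (U s) := by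
    intro t ht
    have h1 : Phi K hω hK.le hT.le g u ⟨t, ht⟩ = u ⟨t, ht⟩ := by rw [hfix]
    rw [Phi_apply] at h1
    have h2 : U t = u ⟨t, ht⟩ := by rw [hUdef]; simp [Set.projIcc_of_mem hT.le ht]
    rw [h2, ← h1]
  refine ⟨U, hUcont, ?_, ?_⟩
  · intro t ht
    have hP : HasDerivAt (fun r : ℝ => g + ∫ s in (0:ℝ)..r, Fv hω K (U s)) (Fv hω K (U t)) t := by
      refine HasDerivAt.const_add g ?_
      exact intervalIntegral.integral_hasDerivAt_right (hh.intervalIntegrable _ _)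
        (hh.stronglyMeasurable.stronglyMeasurableAtFilter) hh.continuousAt
    exact (hP.hasDerivWithinAt).congr (fun y hy => hU_eq y hy) (hU_eq t ht)
  · rw [hU_eq 0 ⟨le_rfl, hT.le⟩, intervalIntegral.integral_same, add_zero]

lemma sol_hasDeriv (hω : MemLp ω 2 muI) {U D : ℝ → Lp ℝ 2 muI}
    (hUc : ContinuousOn U (Set.Icc 0 T))
    (hprop : ∀ t ∈ Set.Icc (0:ℝ) T, HasDerivWithinAt U (D t) (Set.Icc 0 T) t ∧
      ∀ᵐ x ∂muI, (D t : ℝ → ℝ) x = clRHS ω K (U t) x)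
    (hT : 0 < T) :
    ∀ t ∈ Set.Ico (0:ℝ) T, HasDerivWithinAt U (Fv hω K (U t)) (Set.Ici t) t := by
  intro t ht
  have htIcc : t ∈ Set.Icc (0:ℝ) T := ⟨ht.1, ht.2.le⟩
  have hD : D t = Fv hω K (U t) := by
    apply Lp.ext
    have h1 : (⇑(D t) : ℝ → ℝ) =ᵐ[muI] clRHS ω K (U t) := (hprop t htIcc).2
    exact h1.trans (Fv_ae hω (U t)).symm
  have h1 : HasDerivWithinAt U (Fv hω K (U t)) (Set.Icc 0 T) t := hD ▸ (hprop t htIcc).1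
  exact h1.mono_of_mem_nhdsWithin (Icc_mem_nhdsGE_of_mem ht)

lemma sol_dist (hω : MemLp ω 2 muI) (hK : 0 < K) (hT : 0 < T)
    {U V : ℝ → Lp ℝ 2 muI} {DU DV : ℝ → Lp ℝ 2 muI}
    (hUc : ContinuousOn U (Set.Icc 0 T)) (hVc : ContinuousOn V (Set.Icc 0 T))
    (hUp : ∀ t ∈ Set.Icc (0:ℝ) T, HasDerivWithinAt U (DU t) (Set.Icc 0 T) t ∧
      ∀ᵐ x ∂muI, (DU t : ℝ → ℝ) x = clRHS ω K (U t) x)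
    (hVp : ∀ t ∈ Set.Icc (0:ℝ) T, HasDerivWithinAt V (DV t) (Set.Icc 0 T) t ∧
      ∀ᵐ x ∂muI, (DV t : ℝ → ℝ) x = clRHS ω K (V t) x) :
    ∀ t ∈ Set.Icc (0:ℝ) T, dist (U t) (V t) ≤ dist (U 0) (V 0) * Real.exp (4*K*t) := by
  intro t ht
  have h := dist_le_of_trajectories_ODE (v := fun _ x => Fv hω K x)
    (K := (4*K).toNNReal)
    (fun _ => Fv_lipschitzWith hω hK.le) hUc
    (sol_hasDeriv hω hUc hUp hT) hVc (sol_hasDeriv hω hVc hVp hT) le_rfl t ht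
  refine h.trans ?_
  rw [Real.coe_toNNReal _ (by positivity), sub_zero]

end Main

/-- For any `T ∈ (0,∞)` and any `g ∈ L²(I)` there is a unique solution
`u ∈ C¹([0,T], L²(I))` of the continuum-limit Kuramoto equation with `u(0) = g`, and the
solution depends continuously on the initial datum `g` (in `L²(I)`, uniformly on `[0,T]`). -/
theorem stmt0 (ω : ℝ → ℝ) (hω : MemLp ω 2 muI) (K : ℝ) (hK : 0 < K)
    (T : ℝ) (hT : 0 < T) (g : Lp ℝ 2 muI) :
    (∃ U : ℝ → Lp ℝ 2 muI, IsCLSolLp ω K T U ∧ U 0 = g) ∧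
    (∀ U V : ℝ → Lp ℝ 2 muI, IsCLSolLp ω K T U → IsCLSolLp ω K T V → U 0 = V 0 →
      ∀ t ∈ Set.Icc 0 T, U t = V t) ∧
    (∀ ε > 0, ∃ δ > 0, ∀ g' : Lp ℝ 2 muI, ∀ U V : ℝ → Lp ℝ 2 muI,
      IsCLSolLp ω K T U → IsCLSolLp ω K T V → U 0 = g → V 0 = g' →
      ‖g - g'‖ < δ → ∀ t ∈ Set.Icc 0 T, ‖U t - V t‖ < ε) := by
  refine ⟨?_, ?_, ?_⟩
  · obtain ⟨U, hUcont, hderiv, hU0⟩ := exists_sol hω hK hT g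
    exact ⟨U, ⟨fun t => Fv hω K (U t), hUcont.continuousOn,
      ((Fv_continuous hω hK.le).comp hUcont).continuousOn,
      fun t ht => ⟨hderiv t ht, Fv_ae hω (U t)⟩⟩, hU0⟩
  · intro U V hU hV h0 t ht
    obtain ⟨DU, hUc, _, hUp⟩ := hU
    obtain ⟨DV, hVc, _, hVp⟩ := hV
    have h := sol_dist hω hK hT hUc hVc hUp hVp t ht
    rw [h0, dist_self, zero_mul] at h
    exact dist_le_zero.mp h
  · intro ε hε
    refine ⟨ε / Real.exp (4*K*T), by positivity, ?_⟩
    intro g' U V hU hV hU0 hV0 hlt t ht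
    obtain ⟨DU, hUc, _, hUp⟩ := hU
    obtain ⟨DV, hVc, _, hVp⟩ := hV
    have h := sol_dist hω hK hT hUc hVc hUp hVp t ht
    rw [hU0, hV0] at h
    calc ‖U t - V t‖ = dist (U t) (V t) := (dist_eq_norm _ _).symm
      _ ≤ dist g g' * Real.exp (4*K*t) := h
      _ ≤ dist g g' * Real.exp (4*K*T) := by
          apply mul_le_mul_of_nonneg_left _ dist_nonneg
          exact Real.exp_le_exp.mpr (by nlinarith [ht.1, ht.2])
      _ < (ε / Real.exp (4*K*T)) * Real.exp (4*K*T) := by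
          apply mul_lt_mul_of_pos_right _ (Real.exp_pos _)
          rw [dist_eq_norm]
          exact hlt
      _ = ε := div_mul_cancel₀ _ (Real.exp_ne_zero _)
end

section
/- If n_0 is a prime number, then χ^σ(1) ≠ 0 for every sign sequence σ ∈ Σ_{n_0}. Equivalently, for prime n_0 there is no choice of signs s_j ∈ {0, ±1} (j = 1,…,n_0, not all arising trivially) with 1 + 2 Σ_{j=1}^{n_0} s_j √(1 − (j/n_0)²) = 0. (Consequently, at least 2^{2(n_0−1)} pitchfork bifurcations occur in the reduced Kuramoto system when n_0 is prime.) -/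
open Real Set Filter

/-- coefficient of the natural frequency of the `i`-th oscillator (0-indexed) in the reduced system:
`i - n0` for `i < n0` (paper's `i - n0 - 1`, 1-indexed) and `i - n0 + 1` otherwise. -/
noncomputable def redCoeff (n0 : ℕ) (i : Fin (2 * n0)) : ℝ :=
  if (i : ℕ) < n0 then (i : ℕ) - (n0 : ℝ) else (i : ℕ) - (n0 : ℝ) + 1

/-- right-hand side of the reduced Kuramoto system on `𝕋^{2 n0}` (with `n = 2 n0 + 1`, `ν = a/n`). -/
noncomputable def redField (n0 : ℕ) (a K : ℝ) (v : Fin (2 * n0) → ℝ) (i : Fin (2 * n0)) : ℝ :=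
  redCoeff n0 i * (a / (2 * (n0 : ℝ) + 1)) -
    (K / (2 * (n0 : ℝ) + 1)) *
      (2 * Real.sin (v i) +
        ∑ j ∈ Finset.univ.erase i, (Real.sin (v j) - Real.sin (v j - v i)))

/-- the function `χ^σ`. -/
noncomputable def chi (n0 : ℕ) (σ : Fin (2 * n0) → ℝ) (ξ : ℝ) : ℝ :=
  (ξ / n0) * (1 + ∑ i, σ i * Real.sqrt (1 - (redCoeff n0 i * ξ / n0) ^ 2))

/-- the function `h^σ`. -/
noncomputable def hSigma (n0 : ℕ) (σ : Fin (2 * n0) → ℝ) (ξ : ℝ) : ℝ :=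
  (1 / n0) * ∑ i, σ i * (redCoeff n0 i / n0) ^ 2 /
    Real.sqrt (1 - (redCoeff n0 i * ξ / n0) ^ 2)

/-- the consistency equation for `Ĉ^σ`. -/
def ConsistentC (n0 : ℕ) (a K : ℝ) (σ : Fin (2 * n0) → ℝ) (C : ℝ) : Prop :=
  C ≠ 0 ∧
  (∀ i, |redCoeff n0 i * a / ((2 * (n0 : ℝ) + 1) * K * C)| ≤ 1) ∧
  C = (1 / (2 * (n0 : ℝ) + 1)) *
    (1 + ∑ i, σ i * Real.sqrt (1 - (redCoeff n0 i * a / ((2 * (n0 : ℝ) + 1) * K * C)) ^ 2))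

/-- the angles `φ_i = arcsin((i−n0−1)a/(nKĈ))` resp. `arcsin((i−n0)a/(nKĈ))`. -/
noncomputable def phiC (n0 : ℕ) (a K C : ℝ) (i : Fin (2 * n0)) : ℝ :=
  Real.arcsin (redCoeff n0 i * a / ((2 * (n0 : ℝ) + 1) * K * C))

/-- the angles `φ_i = ± ξ`-parametrized version. -/
noncomputable def phiXi (n0 : ℕ) (s ξ : ℝ) (i : Fin (2 * n0)) : ℝ :=
  s * Real.arcsin (redCoeff n0 i * ξ / n0)

/-- the point `v^σ` built from signs `σ` and angles `φ`. -/
noncomputable def vSigma (n0 : ℕ) (σ : Fin (2 * n0) → ℝ) (φ : Fin (2 * n0) → ℝ)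
    (i : Fin (2 * n0)) : ℝ :=
  if σ i = 1 then φ i else if 0 < φ i then π - φ i else -φ i - π

/-- `v` is a solution of the reduced Kuramoto system. -/
def IsRedSol (n0 : ℕ) (a K : ℝ) (v : ℝ → Fin (2 * n0) → ℝ) : Prop :=
  ∀ t : ℝ, ∀ i, HasDerivAt (fun s => v s i) (redField n0 a K (v t) i) t

/-- Lyapunov stability of an equilibrium of the reduced Kuramoto system. -/
def RedStable (n0 : ℕ) (a K : ℝ) (vstar : Fin (2 * n0) → ℝ) : Prop :=
  ∀ ε > 0, ∃ δ > 0, ∀ v : ℝ → Fin (2 * n0) → ℝ, IsRedSol n0 a K v →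
    dist (v 0) vstar < δ → ∀ t ≥ 0, dist (v t) vstar < ε

/-- asymptotic stability of an equilibrium of the reduced Kuramoto system. -/
def RedAsympStable (n0 : ℕ) (a K : ℝ) (vstar : Fin (2 * n0) → ℝ) : Prop :=
  RedStable n0 a K vstar ∧
  ∃ δ > 0, ∀ v : ℝ → Fin (2 * n0) → ℝ, IsRedSol n0 a K v →
    dist (v 0) vstar < δ → Tendsto (fun t => v t) atTop (nhds vstar)

lemma isIntegral_sqrt_nat (m : ℕ) : IsIntegral ℤ (Real.sqrt m) := by
  refine ⟨Polynomial.X ^ 2 - Polynomial.C (m : ℤ), Polynomial.monic_X_pow_sub_C _ two_ne_zero, ?_⟩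
  have h : Real.sqrt m ^ 2 = (m : ℝ) := Real.sq_sqrt (Nat.cast_nonneg m)
  simp [h]

lemma core (n0 : ℕ) (hp : Nat.Prime n0) (s : Fin n0 → ℝ)
    (hs : ∀ j, s j = 0 ∨ s j = 1 ∨ s j = -1) :
    1 + 2 * ∑ j, s j * Real.sqrt (1 - ((((j : ℕ) : ℝ) + 1) / n0) ^ 2) ≠ 0 := by
  intro h
  have hn0' : 0 < n0 := hp.pos
  have hn0 : (0:ℝ) < (n0:ℝ) := by exact_mod_cast hn0'
  have key : ∀ j : Fin n0, Real.sqrt (1 - ((((j : ℕ) : ℝ) + 1) / n0) ^ 2)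
      = Real.sqrt ((n0 ^ 2 - ((j : ℕ) + 1) ^ 2 : ℕ)) / n0 := by
    intro j
    have hle : (j : ℕ) + 1 ≤ n0 := j.2
    have hle2 : ((j:ℕ)+1)^2 ≤ n0^2 := Nat.pow_le_pow_left hle 2
    have hcast : ((n0 ^ 2 - ((j : ℕ) + 1) ^ 2 : ℕ) : ℝ) = (n0:ℝ)^2 - (((j:ℕ):ℝ)+1)^2 := by
      rw [Nat.cast_sub hle2]; push_cast; ring
    rw [show (1 : ℝ) - ((((j : ℕ) : ℝ) + 1) / n0) ^ 2
        = ((n0:ℝ)^2 - (((j:ℕ):ℝ)+1)^2) / (n0:ℝ)^2 by field_simp]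
    rw [← hcast, Real.sqrt_div (Nat.cast_nonneg _), Real.sqrt_sq hn0.le]
  set x := ∑ j : Fin n0, s j * Real.sqrt ((n0 ^ 2 - ((j : ℕ) + 1) ^ 2 : ℕ)) with hxdef
  have hsum : ∑ j : Fin n0, s j * Real.sqrt (1 - ((((j : ℕ) : ℝ) + 1) / n0) ^ 2) = x / n0 := by
    rw [hxdef, Finset.sum_div]
    exact Finset.sum_congr rfl fun j _ => by rw [key j, mul_div_assoc]
  rw [hsum] at h
  have hx2 : (n0:ℝ) = -2 * x := by field_simp at h; linarith
  have hxi : IsIntegral ℤ x := by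
    apply IsIntegral.sum
    intro j _
    rcases hs j with h' | h' | h' <;> rw [h']
    · simpa using isIntegral_zero
    · simpa using isIntegral_sqrt_nat (n0 ^ 2 - ((j : ℕ) + 1) ^ 2)
    · simpa using (isIntegral_sqrt_nat (n0 ^ 2 - ((j : ℕ) + 1) ^ 2)).neg
  have hint : IsIntegral ℤ ((n0 : ℚ) / 2) := by
    have h1 : IsIntegral ℤ ((n0 : ℝ) / 2) := by
      rw [show ((n0:ℝ)/2) = -x by linarith]
      exact hxi.neg
    have h2 : algebraMap ℚ ℝ ((n0:ℚ)/2) = (n0:ℝ)/2 := by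
      rw [eq_ratCast]; push_cast; ring
    rw [← h2] at h1
    exact (isIntegral_algebraMap_iff (algebraMap ℚ ℝ).injective).mp h1
  obtain ⟨z, hz⟩ := IsIntegrallyClosed.isIntegral_iff.mp hint
  have hz' : ((n0 : ℤ) : ℚ) = ((2 * z : ℤ) : ℚ) := by
    have hz2 : ((z : ℚ)) = (n0:ℚ)/2 := by rw [← hz]; simp
    push_cast
    rw [hz2]; ring
  have hdvd : 2 ∣ n0 := by
    have : (2:ℤ) ∣ (n0:ℤ) := ⟨z, by exact_mod_cast hz'⟩
    exact_mod_cast this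
  have hn2 : n0 = 2 := ((hp.eq_one_or_self_of_dvd 2 hdvd).resolve_left (by norm_num)).symm
  subst hn2
  have hx : x = s 0 * Real.sqrt 3 := by
    rw [hxdef, Fin.sum_univ_two]
    norm_num
  have h3 : Real.sqrt 3 ^ 2 = 3 := Real.sq_sqrt (by norm_num)
  have h3' : 0 ≤ Real.sqrt 3 := Real.sqrt_nonneg 3
  rw [hx] at hx2
  norm_num at hx2
  rcases hs 0 with h' | h' | h' <;> rw [h'] at hx2 <;> nlinarith

/-- If `n_0` is prime, then `χ^σ(1) ≠ 0` for every sign sequence `σ`;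
equivalently, there is no choice of `s_j ∈ {0, ±1}` (`j = 1,…,n_0`) with
`1 + 2 Σ_j s_j √(1 − (j/n_0)²) = 0`. -/
theorem stmt12 (n0 : ℕ) (hp : Nat.Prime n0) :
    (∀ σ : Fin (2 * n0) → ℝ, (∀ i, σ i = 1 ∨ σ i = -1) → chi n0 σ 1 ≠ 0) ∧
    (∀ s : Fin n0 → ℝ, (∀ j, s j = 0 ∨ s j = 1 ∨ s j = -1) →
      1 + 2 * ∑ j, s j * Real.sqrt (1 - ((((j : ℕ) : ℝ) + 1) / n0) ^ 2) ≠ 0) := by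
  constructor
  · intro σ hσ hzero
    have hn0' : 0 < n0 := hp.pos
    have hn0 : (0:ℝ) < n0 := by exact_mod_cast hn0'
    have hS : 1 + ∑ i, σ i * Real.sqrt (1 - (redCoeff n0 i * 1 / n0) ^ 2) = 0 := by
      rcases mul_eq_zero.mp hzero with h | h
      · exact absurd h (by positivity)
      · exact h
    set c : Fin (n0 + n0) → Fin (2 * n0) := Fin.cast (two_mul n0).symm with hcdef
    set s : Fin n0 → ℝ := fun j =>
      (σ (c (Fin.castAdd n0 j.rev)) + σ (c (Fin.natAdd n0 j))) / 2 with hsdef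
    have hs : ∀ j, s j = 0 ∨ s j = 1 ∨ s j = -1 := by
      intro j
      have hj : s j = (σ (c (Fin.castAdd n0 j.rev)) + σ (c (Fin.natAdd n0 j))) / 2 := rfl
      rw [hj]
      rcases hσ (c (Fin.castAdd n0 j.rev)) with h1 | h1 <;>
        rcases hσ (c (Fin.natAdd n0 j)) with h2 | h2 <;>
        rw [h1, h2] <;> norm_num
    have hc1 : ∀ k : Fin n0, redCoeff n0 (c (Fin.castAdd n0 k)) = ((k:ℕ):ℝ) - n0 := by
      intro k
      simp [redCoeff, hcdef, Fin.is_lt k]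
    have hc2 : ∀ k : Fin n0, redCoeff n0 (c (Fin.natAdd n0 k)) = ((k:ℕ):ℝ) + 1 := by
      intro k
      simp [redCoeff, hcdef]
    have hsplit : ∑ i, σ i * Real.sqrt (1 - (redCoeff n0 i * 1 / n0) ^ 2)
        = 2 * ∑ j : Fin n0, s j * Real.sqrt (1 - ((((j : ℕ) : ℝ) + 1) / n0) ^ 2) := by
      have e1 : ∑ i, σ i * Real.sqrt (1 - (redCoeff n0 i * 1 / n0) ^ 2)
          = ∑ i : Fin (n0 + n0), σ (c i) * Real.sqrt (1 - (redCoeff n0 (c i) * 1 / n0) ^ 2) :=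
        (Fintype.sum_equiv (finCongr (two_mul n0).symm) _ _ fun i => rfl).symm
      rw [e1, Fin.sum_univ_add]
      have e2 : ∀ k : Fin n0,
          σ (c (Fin.natAdd n0 k)) * Real.sqrt (1 - (redCoeff n0 (c (Fin.natAdd n0 k)) * 1 / n0) ^ 2)
          = σ (c (Fin.natAdd n0 k)) * Real.sqrt (1 - ((((k : ℕ) : ℝ) + 1) / n0) ^ 2) := by
        intro k; rw [hc2 k, mul_one]
      have e3 : ∑ k : Fin n0,
          σ (c (Fin.castAdd n0 k)) * Real.sqrt (1 - (redCoeff n0 (c (Fin.castAdd n0 k)) * 1 / n0) ^ 2)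
          = ∑ j : Fin n0, σ (c (Fin.castAdd n0 j.rev)) * Real.sqrt (1 - ((((j : ℕ) : ℝ) + 1) / n0) ^ 2) := by
        refine (Fintype.sum_equiv (Fin.revPerm) _ _ fun j => ?_).symm
        have hrev : ((j.rev : ℕ) : ℝ) = (n0 : ℝ) - (((j:ℕ):ℝ) + 1) := by
          have h1 : (j.rev : ℕ) = n0 - ((j:ℕ) + 1) := by
            rw [Fin.val_rev]
          have h2 : (j:ℕ) + 1 ≤ n0 := j.2
          rw [h1, Nat.cast_sub h2]; push_cast; ring
        rw [hc1, mul_one]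
        simp only [Fin.revPerm_apply]
        congr 2
        rw [hrev]
        ring
      rw [e3, Finset.sum_congr rfl fun k _ => e2 k, ← Finset.sum_add_distrib,
        Finset.mul_sum]
      refine Finset.sum_congr rfl fun j _ => ?_
      have hj : s j = (σ (c (Fin.castAdd n0 j.rev)) + σ (c (Fin.natAdd n0 j))) / 2 := rfl
      rw [hj]
      ring
    rw [hsplit] at hS
    exact core n0 hp s hs hS
  · exact fun s hs => core n0 hp s hs
end
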